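/- Let G be a finite simple graph with at least one edge. Then the maximum size of a self disjoint set in G, the maximum size of a self semi-disjoint set in G, and the maximum total number of flowers of a strongly disjoint set of bouquets of G are all equal (that is, d_{1,G} = d_{2,G} = d_G). -/

import Mathlib

variable {V : Type*} [DecidableEq V] [Fintype V]

/-- The union of a family of edges. -/
def unionEdges (M : Finset (Finset V)) : Finset V := M.biUnion id

/-- `E` is the edge set of a simple hypergraph: every edge has at least two
vertices and no edge is contained in another distinct edge. -/
def IsSimpleHypergraph (E : Finset (Finset V)) : Prop :=
  (∀ S ∈ E, 2 ≤ S.card) ∧ ∀ S ∈ E, ∀ T ∈ E, S ⊆ T → S = T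

/-- A family `M` of edges of `E` is a semi-induced matching if no edge of `E`
outside `M` is contained in the union of the members of `M`. -/
def IsSemiInducedMatching (E M : Finset (Finset V)) : Prop :=
  M ⊆ E ∧ ∀ S ∈ E, S ∉ M → ¬ S ⊆ unionEdges M

/-- An induced matching is a semi-induced matching whose edges are pairwise disjoint. -/
def IsInducedMatching (E M : Finset (Finset V)) : Prop :=
  IsSemiInducedMatching E M ∧ ∀ S ∈ M, ∀ T ∈ M, S ≠ T → Disjoint S T

/-- A self semi-induced matching is a semi-induced matching in which no member
is contained in the union of the other members. -/
def IsSelfSemiInducedMatching (E M : Finset (Finset V)) : Prop :=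
  IsSemiInducedMatching E M ∧ ∀ S ∈ M, ¬ S ⊆ unionEdges (M.erase S)

/-- A self-contained semi-induced matching. -/
def IsSelfContainedSemiInducedMatching (E M : Finset (Finset V)) : Prop :=
  M ⊆ E ∧
  (∀ S ∈ E, S ∉ M → ¬ S ⊆ unionEdges M ∨ ∃ T ∈ M, T ⊆ S ∪ unionEdges (M.erase T)) ∧
  ∀ S ∈ M, ¬ S ⊆ unionEdges (M.erase S)

/-- A self disjoint set of edges. -/
def IsSelfDisjointSet (E M : Finset (Finset V)) : Prop :=
  M ⊆ E ∧ (∀ S ∈ M, ¬ S ⊆ unionEdges (M.erase S)) ∧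
  ∃ M₀ ⊆ M, IsInducedMatching E M₀ ∧
    ∀ S ∈ M, S ∉ M₀ → ∃ T ∈ M₀, (S \ T).card = 1

/-- A self semi-disjoint set of edges. -/
def IsSelfSemiDisjointSet (E M : Finset (Finset V)) : Prop :=
  M ⊆ E ∧ (∀ S ∈ M, ¬ S ⊆ unionEdges (M.erase S)) ∧
  ∃ M₀ ⊆ M, IsSemiInducedMatching E M₀ ∧
    ∀ S ∈ M, S ∉ M₀ → ∃ T ∈ M₀, (S \ T).card = 1

/-- A bouquet of the (2-uniform) graph with edge set `E`, given by its root `b.1`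
and its nonempty set of flowers `b.2`; its stems must be edges of `E`. -/
def IsBouquet (E : Finset (Finset V)) (b : V × Finset V) : Prop :=
  b.2.Nonempty ∧ b.1 ∉ b.2 ∧ ∀ y ∈ b.2, ({b.1, y} : Finset V) ∈ E

/-- The vertex set of a bouquet. -/
def bouquetVerts (b : V × Finset V) : Finset V := insert b.1 b.2

/-- The set of stems of a bouquet. -/
def stems (b : V × Finset V) : Finset (Finset V) :=
  b.2.image fun y => ({b.1, y} : Finset V)

/-- A strongly disjoint set of bouquets: the vertex sets of the bouquets are
pairwise disjoint and one can choose one stem from each bouquet such that the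
chosen stems form an induced matching. -/
def IsStronglyDisjointBouquets (E : Finset (Finset V)) (B : Finset (V × Finset V)) : Prop :=
  (∀ b ∈ B, IsBouquet E b) ∧
  (∀ b ∈ B, ∀ b' ∈ B, b ≠ b' → Disjoint (bouquetVerts b) (bouquetVerts b')) ∧
  ∃ f : V × Finset V → V, (∀ b ∈ B, f b ∈ b.2) ∧
    IsInducedMatching E (B.image fun b => ({b.1, f b} : Finset V))

/-! Every edge `S` of a self semi-disjoint set `M` has a vertex lying in no other member, its
flower; the other vertex is its root. Grouping the edges of `M` by root gives vertex-disjoint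
bouquets with `|M|` flowers in total. An edge outside the semi-induced matching `M₀` meets some
edge of `M₀`, and two edges of `M` meet only if they share their root, so every bouquet has a stem
in `M₀`. Those stems have distinct roots, hence are pairwise disjoint, and as a subfamily of the
self semi-induced matching `M₀` they are semi-induced: they form an induced matching. Conversely,
the stems of strongly disjoint bouquets form a self disjoint set (flowers are private vertices)
with the chosen stems as `M₀`. Together with "self disjoint ⇒ self semi-disjoint", the three sets
of attainable sizes coincide. -/

section

variable {α : Type*} [DecidableEq α]

lemma mem_unionEdges {M : Finset (Finset α)} {x : α} :
    x ∈ unionEdges M ↔ ∃ S ∈ M, x ∈ S := by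
  simp [unionEdges]

lemma unionEdges_mono {M N : Finset (Finset α)} (h : M ⊆ N) : unionEdges M ⊆ unionEdges N :=
  Finset.biUnion_subset_biUnion_of_subset_left _ h

lemma eq_of_mem_of_notMem_unionEdges_erase {M : Finset (Finset α)} {S T : Finset α} {x : α}
    (hx : x ∉ unionEdges (M.erase S)) (hT : T ∈ M) (hxT : x ∈ T) : T = S := by
  by_contra hTS
  exact hx (mem_unionEdges.mpr ⟨T, Finset.mem_erase.mpr ⟨hTS, hT⟩, hxT⟩)

lemma isInducedMatching_empty {E : Finset (Finset α)} (hE : ∅ ∉ E) :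
    IsInducedMatching E ∅ := by
  refine ⟨⟨Finset.empty_subset _, fun S hS _ hsub => ?_⟩, by simp⟩
  have hS₀ : S = ∅ := Finset.subset_empty.mp (by simpa [unionEdges] using hsub)
  exact hE (hS₀ ▸ hS)

lemma IsSelfDisjointSet.isSelfSemiDisjointSet {E M : Finset (Finset α)}
    (h : IsSelfDisjointSet E M) : IsSelfSemiDisjointSet E M := by
  obtain ⟨hME, hself, M₀, hM₀, hind, hnear⟩ := h
  exact ⟨hME, hself, M₀, hM₀, hind.1, hnear⟩

/-- A member of `M` outside `N` keeps its private vertex outside `unionEdges N`. -/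
lemma IsSelfSemiInducedMatching.isSemiInducedMatching_of_subset {E M N : Finset (Finset α)}
    (hM : IsSelfSemiInducedMatching E M) (hN : N ⊆ M) : IsSemiInducedMatching E N := by
  refine ⟨hN.trans hM.1.1, fun S hS hSN hsub => ?_⟩
  by_cases hSM : S ∈ M
  · exact hM.2 S hSM (hsub.trans (unionEdges_mono fun T hT =>
      Finset.mem_erase.mpr ⟨fun h => hSN (h ▸ hT), hN hT⟩))
  · exact hM.1.2 S hS hSM (hsub.trans (unionEdges_mono hN))

lemma mem_stems {b : α × Finset α} {S : Finset α} :
    S ∈ stems b ↔ ∃ y ∈ b.2, {b.1, y} = S := by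
  simp [stems]

lemma subset_bouquetVerts_of_mem_stems {b : α × Finset α} {S : Finset α} (hS : S ∈ stems b) :
    S ⊆ bouquetVerts b := by
  obtain ⟨y, hy, rfl⟩ := mem_stems.mp hS
  exact Finset.insert_subset_insert _ (Finset.singleton_subset_iff.mpr hy)

lemma eq_of_pair_eq_pair {x y y' : α} (h : ({x, y} : Finset α) = {x, y'}) (hy : y ≠ x) :
    y = y' := by
  have : y ∈ ({x, y'} : Finset α) := h ▸ by simp
  simpa [hy] using this

lemma card_stems {b : α × Finset α} (hb : b.1 ∉ b.2) : (stems b).card = b.2.card :=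
  Finset.card_image_of_injOn fun _ hy _ _ h =>
    eq_of_pair_eq_pair h fun h' => hb (h' ▸ hy)

/-- All stems of all bouquets; each flower is a vertex private to its stem. -/
lemma IsStronglyDisjointBouquets.exists_selfDisjointSet {E : Finset (Finset α)}
    {B : Finset (α × Finset α)} (hB : IsStronglyDisjointBouquets E B) :
    ∃ M, IsSelfDisjointSet E M ∧ M.card = ∑ b ∈ B, b.2.card := by
  obtain ⟨hbq, hdisj, f, hf, hind⟩ := hB
  have root_notMem : ∀ b ∈ B, b.1 ∉ b.2 := fun b hb => (hbq b hb).2.1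
  have hstems : (B : Set (α × Finset α)).PairwiseDisjoint stems := by
    intro b hb b' hb' hbb'
    refine Finset.disjoint_left.mpr fun S hS hS' => ?_
    obtain ⟨y, -, rfl⟩ := mem_stems.mp hS
    exact Finset.disjoint_left.mp (hdisj b hb b' hb' hbb')
      (subset_bouquetVerts_of_mem_stems hS (Finset.mem_insert_self _ _))
      (subset_bouquetVerts_of_mem_stems hS' (Finset.mem_insert_self _ _))
  have mem_M : ∀ {S}, S ∈ B.biUnion stems ↔ ∃ b ∈ B, ∃ y ∈ b.2, {b.1, y} = S := by
    simp [mem_stems]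
  refine ⟨B.biUnion stems, ⟨?_, ?_, _, ?_, hind, ?_⟩, ?_⟩
  · intro S hS
    obtain ⟨b, hb, y, hy, rfl⟩ := mem_M.mp hS
    exact (hbq b hb).2.2 y hy
  · intro S hS hsub
    obtain ⟨b, hb, y, hy, rfl⟩ := mem_M.mp hS
    obtain ⟨T, hT, hyT⟩ := mem_unionEdges.mp (hsub (Finset.mem_insert_of_mem (Finset.mem_singleton_self y)))
    obtain ⟨hTS, hT⟩ := Finset.mem_erase.mp hT
    obtain ⟨b', hb', y', hy', rfl⟩ := mem_M.mp hT
    obtain rfl : b' = b := by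
      by_contra hbb'
      exact Finset.disjoint_left.mp (hdisj b hb b' hb' (Ne.symm hbb'))
        (Finset.mem_insert_of_mem hy)
        (subset_bouquetVerts_of_mem_stems (mem_stems.mpr ⟨y', hy', rfl⟩) hyT)
    have hy'y : y' = y := by
      rcases Finset.mem_insert.mp hyT with h | h
      · exact absurd (h ▸ hy) (root_notMem b' hb)
      · exact (Finset.mem_singleton.mp h).symm
    exact hTS (by rw [hy'y])
  · intro S hS
    obtain ⟨b, hb, rfl⟩ := Finset.mem_image.mp hS
    exact mem_M.mpr ⟨b, hb, f b, hf b hb, rfl⟩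
  · intro S hS hS₀
    obtain ⟨b, hb, y, hy, rfl⟩ := mem_M.mp hS
    refine ⟨{b.1, f b}, Finset.mem_image_of_mem _ hb, Finset.card_eq_one.mpr ⟨y, ?_⟩⟩
    have hyx : y ≠ b.1 := fun h => root_notMem b hb (h ▸ hy)
    have hyf : y ≠ f b := fun h => hS₀ (Finset.mem_image.mpr ⟨b, hb, by rw [h]⟩)
    ext z
    simp only [Finset.mem_sdiff, Finset.mem_insert, Finset.mem_singleton]
    grind
  · rw [Finset.card_biUnion hstems]
    exact Finset.sum_congr rfl fun b hb => card_stems (root_notMem b hb)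

structure IsRooting (M : Finset (Finset α)) (root flower : Finset α → α) : Prop where
  eq_pair : ∀ S ∈ M, S = {root S, flower S}
  root_ne_flower : ∀ S ∈ M, root S ≠ flower S
  eq_of_flower_mem : ∀ S ∈ M, ∀ T ∈ M, flower S ∈ T → S = T

/-- The flower of `S` is a vertex of `S` outside the other members, the root its other vertex. -/
lemma exists_isRooting [Nonempty α] {M : Finset (Finset α)} (h2 : ∀ S ∈ M, S.card = 2)
    (hself : ∀ S ∈ M, ¬ S ⊆ unionEdges (M.erase S)) :
    ∃ root flower, IsRooting M root flower := by
  have hflower : ∀ S ∈ M, ∃ a ∈ S, a ∉ unionEdges (M.erase S) :=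
    fun S hS => Finset.not_subset.mp (hself S hS)
  choose! flower hmem hpriv using hflower
  have hroot : ∀ S ∈ M, ∃ r, S.erase (flower S) = {r} := fun S hS =>
    Finset.card_eq_one.mp (by rw [Finset.card_erase_of_mem (hmem S hS), h2 S hS])
  choose! root hroot using hroot
  refine ⟨root, flower, fun S hS => ?_, fun S hS => ?_, fun S hS T hT hST =>
    (eq_of_mem_of_notMem_unionEdges_erase (hpriv S hS) hT hST).symm⟩
  · rw [Finset.pair_comm, ← hroot S hS, Finset.insert_erase (hmem S hS)]
  · exact Finset.ne_of_mem_erase (hroot S hS ▸ Finset.mem_singleton_self (root S))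

def flowersAt (M : Finset (Finset α)) (root flower : Finset α → α) (x : α) : Finset α :=
  (M.filter (root · = x)).image flower

def rootedBouquets (M : Finset (Finset α)) (root flower : Finset α → α) :
    Finset (α × Finset α) :=
  (M.image root).image fun x => (x, flowersAt M root flower x)

lemma mem_flowersAt {M : Finset (Finset α)} {root flower : Finset α → α} {x y : α} :
    y ∈ flowersAt M root flower x ↔ ∃ S ∈ M, root S = x ∧ flower S = y := by
  simp [flowersAt, and_assoc]

namespace IsRooting

variable {M : Finset (Finset α)} {root flower : Finset α → α} {S T : Finset α}

lemma mem_iff (h : IsRooting M root flower) (hS : S ∈ M) {x : α} :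
    x ∈ S ↔ x = root S ∨ x = flower S :=
  (Finset.ext_iff.mp (h.eq_pair S hS) x).trans (by simp)

lemma root_mem (h : IsRooting M root flower) (hS : S ∈ M) : root S ∈ S :=
  (h.mem_iff hS).mpr (Or.inl rfl)

lemma flower_mem (h : IsRooting M root flower) (hS : S ∈ M) : flower S ∈ S :=
  (h.mem_iff hS).mpr (Or.inr rfl)

lemma flower_ne_root (h : IsRooting M root flower) (hS : S ∈ M) (hT : T ∈ M) :
    flower S ≠ root T := by
  intro he
  obtain rfl := h.eq_of_flower_mem S hS T hT (he ▸ h.root_mem hT)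
  exact h.root_ne_flower S hS he.symm

lemma flower_injOn (h : IsRooting M root flower) : Set.InjOn flower M :=
  fun S hS T hT he => h.eq_of_flower_mem S hS T hT (he ▸ h.flower_mem hT)

lemma root_eq_of_not_disjoint (h : IsRooting M root flower) (hS : S ∈ M) (hT : T ∈ M)
    (hST : ¬ Disjoint S T) : root S = root T := by
  obtain ⟨x, hxS, hxT⟩ := Finset.not_disjoint_iff.mp hST
  rcases (h.mem_iff hS).mp hxS with rfl | rfl
  · rcases (h.mem_iff hT).mp hxT with hx | hx
    · exact hx
    · obtain rfl := h.eq_of_flower_mem T hT S hS (hx ▸ hxS)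
      rfl
  · obtain rfl := h.eq_of_flower_mem S hS T hT hxT
    rfl

lemma sum_card_rootedBouquets (h : IsRooting M root flower) :
    ∑ b ∈ rootedBouquets M root flower, b.2.card = M.card := by
  rw [rootedBouquets, Finset.sum_image fun x _ y _ hxy => (Prod.ext_iff.mp hxy).1,
    Finset.card_eq_sum_card_image root M]
  exact Finset.sum_congr rfl fun x _ => Finset.card_image_of_injOn
    (h.flower_injOn.mono (Finset.coe_subset.mpr (Finset.filter_subset _ _)))

lemma isBouquet_of_mem_rootedBouquets {E : Finset (Finset α)} (h : IsRooting M root flower)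
    (hME : M ⊆ E) {b : α × Finset α} (hb : b ∈ rootedBouquets M root flower) :
    IsBouquet E b := by
  obtain ⟨x, hx, rfl⟩ := Finset.mem_image.mp hb
  obtain ⟨S, hS, rfl⟩ := Finset.mem_image.mp hx
  refine ⟨⟨flower S, mem_flowersAt.mpr ⟨S, hS, rfl, rfl⟩⟩, fun hr => ?_, fun y hy => ?_⟩
  · obtain ⟨T, hT, -, hTS⟩ := mem_flowersAt.mp hr
    exact h.flower_ne_root hT hS hTS
  · obtain ⟨T, hT, hTS, rfl⟩ := mem_flowersAt.mp hy
    rw [← hTS, ← h.eq_pair T hT]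
    exact hME hT

lemma exists_mem_of_mem_bouquetVerts (h : IsRooting M root flower) {x z : α}
    (hx : x ∈ M.image root) (hz : z ∈ bouquetVerts (x, flowersAt M root flower x)) :
    ∃ S ∈ M, root S = x ∧ z ∈ S := by
  rcases Finset.mem_insert.mp hz with rfl | hz
  · obtain ⟨S, hS, rfl⟩ := Finset.mem_image.mp hx
    exact ⟨S, hS, rfl, h.root_mem hS⟩
  · obtain ⟨S, hS, hSx, rfl⟩ := mem_flowersAt.mp hz
    exact ⟨S, hS, hSx, h.flower_mem hS⟩

lemma disjoint_bouquetVerts (h : IsRooting M root flower) {b b' : α × Finset α}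
    (hb : b ∈ rootedBouquets M root flower) (hb' : b' ∈ rootedBouquets M root flower)
    (hbb' : b ≠ b') : Disjoint (bouquetVerts b) (bouquetVerts b') := by
  obtain ⟨x, hx, rfl⟩ := Finset.mem_image.mp hb
  obtain ⟨x', hx', rfl⟩ := Finset.mem_image.mp hb'
  refine Finset.disjoint_left.mpr fun z hz hz' => hbb' ?_
  obtain ⟨S, hS, rfl, hzS⟩ := h.exists_mem_of_mem_bouquetVerts hx hz
  obtain ⟨T, hT, rfl, hzT⟩ := h.exists_mem_of_mem_bouquetVerts hx' hz'
  rw [h.root_eq_of_not_disjoint hS hT (Finset.not_disjoint_iff.mpr ⟨z, hzS, hzT⟩)]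

/-- Each edge outside `M₀` meets, hence shares its root with, an edge of `M₀`. -/
lemma exists_mem_root_eq {E M M₀ : Finset (Finset α)} {root flower : Finset α → α}
    (h : IsRooting M root flower) (h2 : ∀ S ∈ E, S.card = 2) (hME : M ⊆ E) (hM₀M : M₀ ⊆ M)
    (hnear : ∀ S ∈ M, S ∉ M₀ → ∃ T ∈ M₀, (S \ T).card = 1) {S : Finset α} (hS : S ∈ M) :
    ∃ T ∈ M₀, root T = root S := by
  by_cases hS₀ : S ∈ M₀
  · exact ⟨S, hS₀, rfl⟩
  obtain ⟨T, hT, hcard⟩ := hnear S hS hS₀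
  refine ⟨T, hT, (h.root_eq_of_not_disjoint hS (hM₀M hT) fun hST => ?_).symm⟩
  rw [Finset.sdiff_eq_self_of_disjoint hST, h2 S (hME hS)] at hcard
  exact absurd hcard (by norm_num)

end IsRooting

/-- The bouquets are the edges of `M` grouped by root; the stem chosen at a root is an edge of
`M₀` with that root. -/
lemma IsSelfSemiDisjointSet.exists_stronglyDisjointBouquets {E M : Finset (Finset α)}
    (h2 : ∀ S ∈ E, S.card = 2) (hM : IsSelfSemiDisjointSet E M) :
    ∃ B : Finset (α × Finset α),
      IsStronglyDisjointBouquets E B ∧ ∑ b ∈ B, b.2.card = M.card := by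
  obtain ⟨hME, hself, M₀, hM₀M, hsemi, hnear⟩ := hM
  rcases M.eq_empty_or_nonempty with rfl | ⟨S, hS⟩
  · exact ⟨∅, ⟨by simp, by simp, fun b => b.1, by simp,
      by simpa using isInducedMatching_empty fun h => by simpa using h2 ∅ h⟩, rfl⟩
  have : Nonempty α :=
    ⟨(Finset.card_pos.mp (by rw [h2 S (hME hS)]; norm_num)).choose⟩
  obtain ⟨root, flower, h⟩ := exists_isRooting (fun S hS => h2 S (hME hS)) hself
  have hroots : ∀ x ∈ M.image root, ∃ T ∈ M₀, root T = x := by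
    simpa using fun S hS => h.exists_mem_root_eq h2 hME hM₀M hnear hS
  choose! stem hstem hroot_stem using hroots
  have hM₀ : IsSelfSemiInducedMatching E M₀ := ⟨hsemi, fun S hS hsub =>
    hself S (hM₀M hS) (hsub.trans (unionEdges_mono (Finset.erase_subset_erase _ hM₀M)))⟩
  have hchosen : (rootedBouquets M root flower).image (fun b => {b.1, flower (stem b.1)}) =
      (M.image root).image stem := by
    rw [rootedBouquets, Finset.image_image]
    refine Finset.image_congr fun x hx => ?_
    show {x, flower (stem x)} = stem x
    conv_rhs => rw [h.eq_pair _ (hM₀M (hstem x hx)), hroot_stem x hx]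
  refine ⟨rootedBouquets M root flower, ⟨fun b => h.isBouquet_of_mem_rootedBouquets hME,
    fun b hb b' hb' => h.disjoint_bouquetVerts hb hb', fun b => flower (stem b.1), ?_, ?_⟩,
    h.sum_card_rootedBouquets⟩
  · intro b hb
    obtain ⟨x, hx, rfl⟩ := Finset.mem_image.mp hb
    exact mem_flowersAt.mpr ⟨stem x, hM₀M (hstem x hx), hroot_stem x hx, rfl⟩
  rw [hchosen]
  refine ⟨hM₀.isSemiInducedMatching_of_subset fun T hT => ?_, fun T hT T' hT' hTT' => ?_⟩
  · obtain ⟨x, hx, rfl⟩ := Finset.mem_image.mp hT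
    exact hstem x hx
  · obtain ⟨x, hx, rfl⟩ := Finset.mem_image.mp hT
    obtain ⟨x', hx', rfl⟩ := Finset.mem_image.mp hT'
    by_contra hdisj
    refine hTT' (congrArg stem ?_)
    rw [← hroot_stem x hx, ← hroot_stem x' hx']
    exact h.root_eq_of_not_disjoint (hM₀M (hstem x hx)) (hM₀M (hstem x' hx')) hdisj

end

theorem d1_eq_d2_eq_dG_general
    (E : Finset (Finset V))
    (h2 : ∀ S ∈ E, S.card = 2) :
    sSup {n : ℕ | ∃ M, IsSelfDisjointSet E M ∧ M.card = n} =
      sSup {n : ℕ | ∃ M, IsSelfSemiDisjointSet E M ∧ M.card = n} ∧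
    sSup {n : ℕ | ∃ M, IsSelfDisjointSet E M ∧ M.card = n} =
      sSup {n : ℕ | ∃ B : Finset (V × Finset V),
        IsStronglyDisjointBouquets E B ∧ (∑ b ∈ B, b.2.card) = n} := by
  set d₁ := {n : ℕ | ∃ M, IsSelfDisjointSet E M ∧ M.card = n}
  set d₂ := {n : ℕ | ∃ M, IsSelfSemiDisjointSet E M ∧ M.card = n}
  set d := {n : ℕ | ∃ B : Finset (V × Finset V),
    IsStronglyDisjointBouquets E B ∧ (∑ b ∈ B, b.2.card) = n}
  have h₁₂ : d₁ ⊆ d₂ := fun _ ⟨M, hM, hn⟩ => ⟨M, hM.isSelfSemiDisjointSet, hn⟩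
  have h₂ : d₂ ⊆ d := fun _ ⟨_, hM, hn⟩ => hn ▸ hM.exists_stronglyDisjointBouquets h2
  have h₁ : d ⊆ d₁ := fun _ ⟨_, hB, hn⟩ => hn ▸ hB.exists_selfDisjointSet
  exact ⟨congrArg sSup (h₁₂.antisymm (h₂.trans h₁)),
    congrArg sSup ((h₁₂.trans h₂).antisymm h₁)⟩

/-- for a graph `G` with at least one edge, the maximum size of a
self disjoint set, the maximum size of a self semi-disjoint set and the maximum
total number of flowers of a strongly disjoint set of bouquets coincide:
`d_{1,G} = d_{2,G} = d_G`. -/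
theorem d1_eq_d2_eq_dG
    (E : Finset (Finset V)) (hH : IsSimpleHypergraph E)
    (h2 : ∀ S ∈ E, S.card = 2) (hne : E.Nonempty) :
    sSup {n : ℕ | ∃ M, IsSelfDisjointSet E M ∧ M.card = n} =
      sSup {n : ℕ | ∃ M, IsSelfSemiDisjointSet E M ∧ M.card = n} ∧
    sSup {n : ℕ | ∃ M, IsSelfDisjointSet E M ∧ M.card = n} =
      sSup {n : ℕ | ∃ B : Finset (V × Finset V),
        IsStronglyDisjointBouquets E B ∧ (∑ b ∈ B, b.2.card) = n} :=
  d1_eq_d2_eq_dG_general E h2
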